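/- Let A = (Q, E, s, F) be a Wheeler GNFA, let ≤ be a Wheeler order on A, and let α ∈ Σ*. Then G_⊣(α) = Q[|G^≺(α)| + 1, |G^≺_⊣(α)|]. -/

import Mathlib

/-- Strict co-lexicographic order: `α ≺ β` iff `α.reverse` is lexicographically
smaller than `β.reverse`. The empty string is the minimum. -/
def ColexLt {σ : Type*} [LinearOrder σ] (α β : List σ) : Prop :=
  List.Lex (· < ·) α.reverse β.reverse

/-- Non-strict co-lexicographic order `α ≼ β`. -/
def ColexLe {σ : Type*} [LinearOrder σ] (α β : List σ) : Prop :=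
  ColexLt α β ∨ α = β

/-- `α` is a strict suffix of `β`. -/
def IsStrictSuffix {σ : Type*} (α β : List σ) : Prop :=
  α <:+ β ∧ α ≠ β

/-- `p(α, k)`: the prefix of `α` of length `k`. -/
def pref {σ : Type*} (α : List σ) (k : ℕ) : List σ := α.take k

/-- `s(α, k)`: the suffix of `α` of length `k`. -/
def suff {σ : Type*} (α : List σ) (k : ℕ) : List σ := α.drop (α.length - k)

/-- The 1-based rank of a state in a finite linear order: `rankQ u = i` means
`u = Q[i]` in the enumeration `Q[1] < Q[2] < ⋯ < Q[|Q|]`. -/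
noncomputable def rankQ {Q : Type*} [Fintype Q] [LinearOrder Q] (u : Q) : ℕ :=
  {v : Q | v ≤ u}.ncard

/-- `Q[i, j] = {Q[i], …, Q[j]}` (empty if `i > j`). -/
def Qiv (Q : Type*) [Fintype Q] [LinearOrder Q] (i j : ℕ) : Set Q :=
  {u | i ≤ rankQ u ∧ rankQ u ≤ j}

/-- A generalized nondeterministic finite automaton: a finite set of
string-labeled edges `E ⊆ Q × Q × Σ*`, an initial state `s`, final states `F`. -/
structure GNFA (σ Q : Type*) where
  E : Finset (Q × Q × List σ)
  s : Q
  F : Finset Q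

namespace GNFA

variable {σ Q : Type*}

/-- `I A u β` means `β ∈ I_u`: `β` is obtained by concatenating the edge labels
along some path from `s` to `u` (in particular `ε ∈ I_s`). -/
inductive I (A : GNFA σ Q) : Q → List σ → Prop
  | base : I A A.s []
  | step {u v : Q} {α ρ : List σ} : I A u α → (u, v, ρ) ∈ A.E → I A v (α ++ ρ)

/-- Reachability along edges. -/
def Reach (A : GNFA σ Q) : Q → Q → Prop :=
  Relation.ReflTransGen (fun x y => ∃ ρ, (x, y, ρ) ∈ A.E)

/-- Every state is reachable from the initial state and is co-reachable
(final or allows reaching a final state). -/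
def Standard (A : GNFA σ Q) : Prop :=
  (∀ u, A.Reach A.s u) ∧ ∀ u, ∃ f ∈ A.F, A.Reach u f

/-- An ε-walk from `u` to `v`: a (possibly empty) sequence of ε-labeled edges. -/
def EpsWalk (A : GNFA σ Q) : Q → Q → Prop :=
  Relation.ReflTransGen (fun x y => (x, y, ([] : List σ)) ∈ A.E)

/-- An `r`-GNFA: all edge labels have length at most `r`. -/
def Bounded (A : GNFA σ Q) (r : ℕ) : Prop := ∀ e ∈ A.E, e.2.2.length ≤ r

/-- A GNFA without ε-transitions: every edge label is nonempty. -/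
def NoEps (A : GNFA σ Q) : Prop := ∀ e ∈ A.E, e.2.2 ≠ []

/-- `λ(u)`: the set of strings labeling some edge entering `u`. -/
def lab (A : GNFA σ Q) (u : Q) : Set (List σ) := {ρ | ∃ u', (u', u, ρ) ∈ A.E}

/-- `G_⊣(α)`: states `u` such that some `β ∈ I_u` has `α` as a suffix. -/
def Gsuf (A : GNFA σ Q) (α : List σ) : Set Q := {u | ∃ β, I A u β ∧ α <:+ β}

/-- `G*(α)`: states reached by an edge whose label has `α` as a suffix. -/
def Gstar (A : GNFA σ Q) (α : List σ) : Set Q := {u | ∃ ρ ∈ A.lab u, α <:+ ρ}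

section Colex
variable [LinearOrder σ]

/-- The preorder `u ≼_A v`. -/
def Preceq (A : GNFA σ Q) (u v : Q) : Prop :=
  ∀ α β, I A u α → I A v β →
    ¬((I A u α ∧ I A v α) ∧ (I A u β ∧ I A v β)) → ColexLt α β

/-- `G^≺(α)`: states `u` such that every `β ∈ I_u` satisfies `β ≺ α`. -/
def Gprec (A : GNFA σ Q) (α : List σ) : Set Q := {u | ∀ β, I A u β → ColexLt β α}

/-- `G^≺_⊣(α) = G^≺(α) ∪ G_⊣(α)`. -/
def GprecSuf (A : GNFA σ Q) (α : List σ) : Set Q := A.Gprec α ∪ A.Gsuf α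

/-- The linear order on `Q` is a Wheeler order on `A` (Axioms 1–4). -/
def IsWheeler [LinearOrder Q] (A : GNFA σ Q) : Prop :=
  (∀ u v : Q, u ≤ v → A.Preceq u v) ∧
  (∀ u : Q, A.s ≤ u) ∧
  (∀ u' u v' v : Q, ∀ ρ ρ' : List σ, (u', u, ρ) ∈ A.E → (v', v, ρ') ∈ A.E →
      u < v → ¬IsStrictSuffix ρ' ρ → ColexLe ρ ρ') ∧
  (∀ u' u v' v : Q, ∀ ρ : List σ, (u', u, ρ) ∈ A.E → (v', v, ρ) ∈ A.E →
      u < v → u' ≤ v')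

end Colex

section Indexed
variable [Fintype Q] [LinearOrder Q]

/-- `out(Q[1, m], ρ)`: number of edges labeled `ρ` leaving states in `Q[1, m]`. -/
noncomputable def outC (A : GNFA σ Q) (m : ℕ) (ρ : List σ) : ℕ :=
  {e : Q × Q × List σ | e ∈ A.E ∧ rankQ e.1 ≤ m ∧ e.2.2 = ρ}.ncard

/-- `in(Q[1, m], ρ)`: number of edges labeled `ρ` entering states in `Q[1, m]`. -/
noncomputable def inC (A : GNFA σ Q) (m : ℕ) (ρ : List σ) : ℕ :=
  {e : Q × Q × List σ | e ∈ A.E ∧ rankQ e.2.1 ≤ m ∧ e.2.2 = ρ}.ncard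

/-- `A_max[i]`: the largest `j` such that there is an ε-walk from `Q[j]` to `Q[i]`. -/
noncomputable def Amax (A : GNFA σ Q) (i : ℕ) : ℕ :=
  sSup {j | ∃ u v : Q, rankQ u = i ∧ rankQ v = j ∧ A.EpsWalk v u}

/-- `A_min[i]`: the smallest `j` such that there is an ε-walk from `Q[j]` to `Q[i]`. -/
noncomputable def Amin (A : GNFA σ Q) (i : ℕ) : ℕ :=
  sInf {j | ∃ u v : Q, rankQ u = i ∧ rankQ v = j ∧ A.EpsWalk v u}

variable [LinearOrder σ]

/-- `f_k = out(Q[1, |G^≺(p(α, |α|−k))|], s(α, k))`. -/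
noncomputable def fk (A : GNFA σ Q) (α : List σ) (k : ℕ) : ℕ :=
  A.outC ((A.Gprec (pref α (α.length - k))).ncard) (suff α k)

/-- `g_k = out(Q[1, |G^≺_⊣(p(α, |α|−k))|], s(α, k))`. -/
noncomputable def gk (A : GNFA σ Q) (α : List σ) (k : ℕ) : ℕ :=
  A.outC ((A.GprecSuf (pref α (α.length - k))).ncard) (suff α k)

/-- The property defining `j*` in Lemmas 2 and 4 (largest `j` satisfying it):
(i) `in(Q[1, j], s(α, k)) ≤ f_k` for every `0 < k < min{r+1, |α|}`; and
(ii) `ρ ≺ α` for every `ρ ∈ Σ^k ∩ λ(Q[h])`, every `1 ≤ h ≤ j`, every `0 < k < r+1`. -/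
def Jcond (A : GNFA σ Q) (r : ℕ) (α : List σ) (j : ℕ) : Prop :=
  (∀ k, 0 < k → k < min (r + 1) α.length → A.inC j (suff α k) ≤ A.fk α k) ∧
  (∀ k, 0 < k → k < r + 1 → ∀ h, 1 ≤ h → h ≤ j → ∀ u : Q, rankQ u = h →
      ∀ ρ : List σ, ρ.length = k → ρ ∈ A.lab u → ColexLt ρ α)

/-- The property defining `i*` (largest `i ≤ |Q|` satisfying it):
if `i ≥ 1` then `Q[i] ∈ G*(α)`. -/
def Icond (A : GNFA σ Q) (α : List σ) (i : ℕ) : Prop :=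
  1 ≤ i → ∃ u : Q, rankQ u = i ∧ u ∈ A.Gstar α

/-- The property defining `j°` (smallest `j ≤ |Q|` satisfying it):
`in(Q[1, j], s(α, k)) ≥ g_k` for every `0 < k < min{r+1, |α|}` with `g_k > f_k`. -/
def Jcond2 (A : GNFA σ Q) (r : ℕ) (α : List σ) (j : ℕ) : Prop :=
  ∀ k, 0 < k → k < min (r + 1) α.length → A.fk α k < A.gk α k →
    A.gk α k ≤ A.inC j (suff α k)

end Indexed

end GNFA

/-!
Axiom 1 of a Wheeler order makes both `G^≺(α)` and `G^≺_⊣(α)` downward closed: for the second,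
if `u ≤ v`, `α` is a suffix of some `γ ∈ I_v` and some `β ∈ I_u` is not `≺ α`, then either
`γ ∈ I_u` or `β ≺ γ`, and in the latter case `α` is a suffix of `β` too. A downward closed set of
states is the initial segment `Q[1, |S|]`. Since no string with suffix `α` is `≺ α`, `G_⊣(α)` is
disjoint from `G^≺(α)`, so it is the difference of the two initial segments.
-/

section Colex
variable {σ : Type*} [LinearOrder σ]

theorem List.IsPrefix.isPrefix_of_not_lex_of_lex :
    ∀ {a b c : List σ}, a <+: c → ¬List.Lex (· < ·) b a → List.Lex (· < ·) b c → a <+: b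
  | [], _, _, _, _, _ => List.nil_prefix
  | _ :: _, [], _, _, hba, _ => absurd List.Lex.nil hba
  | x :: _, _ :: _, _, ⟨_, rfl⟩, hba, hbc => by
    cases hbc with
    | rel h => exact absurd (List.Lex.rel h) hba
    | cons h =>
      exact (List.prefix_cons_inj x).mpr
        (isPrefix_of_not_lex_of_lex ⟨_, rfl⟩ (fun h' => hba (List.Lex.cons h')) h)

theorem ColexLt.trans {a b c : List σ} (hab : ColexLt a b) (hbc : ColexLt b c) : ColexLt a c :=
  List.lt_trans (α := σ) hab hbc

theorem List.IsSuffix.not_colexLt {a b : List σ} (h : a <:+ b) : ¬ColexLt b a :=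
  List.IsPrefix.le (List.reverse_prefix.mpr h)

theorem List.IsSuffix.isSuffix_of_not_colexLt_of_colexLt {a b c : List σ} (h : a <:+ c)
    (hba : ¬ColexLt b a) (hbc : ColexLt b c) : a <:+ b :=
  List.reverse_prefix.mp
    ((List.reverse_prefix.mpr h).isPrefix_of_not_lex_of_lex hba hbc)

end Colex

section Rank
variable {Q : Type*} [Fintype Q] [LinearOrder Q] {S T : Set Q}

theorem IsLowerSet.mem_iff_rankQ_le (hS : IsLowerSet S) (u : Q) :
    u ∈ S ↔ rankQ u ≤ S.ncard := by
  refine ⟨fun hu => Set.ncard_le_ncard fun v hv => hS hv hu, fun hle => ?_⟩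
  by_contra hu
  have hlt : S ⊆ Set.Iio u := fun v hv => lt_of_not_ge fun huv => hu (hS huv hv)
  have : S.ncard < rankQ u :=
    (Set.ncard_le_ncard hlt).trans_lt (Set.ncard_lt_ncard Set.Iio_ssubset_Iic_self)
  omega

theorem Qiv_eq_diff_of_isLowerSet (hS : IsLowerSet S) (hT : IsLowerSet T) :
    Qiv Q (S.ncard + 1) T.ncard = T \ S := by
  ext u
  simp only [Qiv, Set.mem_ofPred_eq, Set.mem_sdiff, hS.mem_iff_rankQ_le, hT.mem_iff_rankQ_le]
  omega

end Rank

namespace GNFA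

variable {σ Q : Type*} (A : GNFA σ Q)

theorem exists_I_of_reach {u : Q} (h : A.Reach A.s u) : ∃ β, A.I u β := by
  induction h with
  | refl => exact ⟨[], I.base⟩
  | tail _ hstep ih =>
    obtain ⟨β, hβ⟩ := ih
    obtain ⟨ρ, hρ⟩ := hstep
    exact ⟨β ++ ρ, I.step hβ hρ⟩

variable {A} [LinearOrder σ]

theorem Preceq.colexLt {u v : Q} {β γ : List σ} (h : A.Preceq u v) (hβ : A.I u β)
    (hγ : A.I v γ) (hne : ¬A.I v β ∨ ¬A.I u γ) : ColexLt β γ :=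
  h β γ hβ hγ (by tauto)

theorem disjoint_Gsuf_Gprec (α : List σ) : Disjoint (A.Gsuf α) (A.Gprec α) :=
  Set.disjoint_left.mpr fun _ ⟨β, hβ, hsuf⟩ hprec => hsuf.not_colexLt (hprec β hβ)

theorem Gsuf_eq_GprecSuf_diff_Gprec (α : List σ) : A.Gsuf α = A.GprecSuf α \ A.Gprec α := by
  rw [GprecSuf, Set.union_sdiff_left, (disjoint_Gsuf_Gprec α).sdiff_eq_left]

variable [LinearOrder Q]

theorem isLowerSet_Gprec (hpre : ∀ u v : Q, u ≤ v → A.Preceq u v)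
    (hreach : ∀ u, A.Reach A.s u) (α : List σ) :
    IsLowerSet (A.Gprec α) := by
  intro v u huv hv β hβ
  obtain ⟨γ, hγ⟩ := A.exists_I_of_reach (hreach v)
  by_cases hvβ : A.I v β
  · exact hv β hvβ
  · exact ((hpre u v huv).colexLt hβ hγ (.inl hvβ)).trans (hv γ hγ)

theorem isLowerSet_GprecSuf (hpre : ∀ u v : Q, u ≤ v → A.Preceq u v)
    (hreach : ∀ u, A.Reach A.s u) (α : List σ) :
    IsLowerSet (A.GprecSuf α) := by
  intro v u huv hv
  by_cases hu : u ∈ A.Gprec α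
  · exact .inl hu
  obtain ⟨β, hβ, hβα⟩ : ∃ β, A.I u β ∧ ¬ColexLt β α := by
    simpa only [Gprec, Set.mem_ofPred_eq, not_forall, exists_prop] using hu
  rcases hv with hv | ⟨γ, hγ, hsuf⟩
  · exact absurd (isLowerSet_Gprec hpre hreach α huv hv) hu
  by_cases huγ : A.I u γ
  · exact .inr ⟨γ, huγ, hsuf⟩
  · exact .inr ⟨β, hβ, hsuf.isSuffix_of_not_colexLt_of_colexLt hβα
      ((hpre u v huv).colexLt hβ hγ (.inr huγ))⟩

end GNFA

theorem gsuf_eq_interval_general {σ Q : Type*} [LinearOrder σ]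
    [Fintype Q] [LinearOrder Q] (A : GNFA σ Q)
    (hA : A.Standard) (hW : A.IsWheeler) (α : List σ) :
    A.Gsuf α = Qiv Q ((A.Gprec α).ncard + 1) ((A.GprecSuf α).ncard) := by
  rw [A.Gsuf_eq_GprecSuf_diff_Gprec,
    Qiv_eq_diff_of_isLowerSet (GNFA.isLowerSet_Gprec hW.1 hA.1 α)
      (GNFA.isLowerSet_GprecSuf hW.1 hA.1 α)]

/-- Let `A` be a Wheeler GNFA with Wheeler order `≤` and
`α ∈ Σ*`. Then `G_⊣(α) = Q[|G^≺(α)| + 1, |G^≺_⊣(α)|]`. -/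
theorem gsuf_eq_interval {σ Q : Type*} [Fintype σ] [LinearOrder σ]
    [Fintype Q] [LinearOrder Q] (A : GNFA σ Q)
    (hA : A.Standard) (hW : A.IsWheeler) (α : List σ) :
    A.Gsuf α = Qiv Q ((A.Gprec α).ncard + 1) ((A.GprecSuf α).ncard) :=
  gsuf_eq_interval_general A hA hW α
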